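/- arXiv:1602.08687 — 9 statements merged into one kernel-verified Lean document; each statement's English description precedes it below -/
import Mathlib

section
/- Let γ_m : [m] → ℕ be a nonincreasing scoring function (γ_m(i) ≥ γ_m(i+1) for all i < m), for each m ≥ 2. Suppose the scoring rule R_γ satisfies the simple majority criterion: in every election where more than half of the voters rank some candidate c first, c is the unique winner (has strictly highest total score). Then for each m, γ_m(1) > γ_m(2) = γ_m(3) = ⋯ = γ_m(m); that is, R_γ coincides with Plurality. -/
/-! A single sincere ballot already forces `γ m 2 < γ m 1`. Against `k + 1` sincere ballots
(`0` first, `1` second) put `k` ballots rotated down by one place (`1` first, `0` last):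
candidate `0` keeps a strict majority, and the criterion says
`(k + 1) γ₂ + k γ₁ < (k + 1) γ₁ + k γₘ`. For `k = γ₁ - γ₂` this reduces to `γ₂ ≤ γₘ`,
and monotonicity squeezes all of `γ₂, …, γₘ` together. -/

def totalScore (γ : ℕ → ℕ → ℕ) {m : ℕ} (V : List (Fin m ≃ Fin m)) (c : Fin m) : ℕ :=
  (V.map fun v => γ m ((v c : ℕ) + 1)).sum

def topCount {m : ℕ} (V : List (Fin m ≃ Fin m)) (c : Fin m) : ℕ :=
  V.countP fun v => decide ((v c : ℕ) = 0)

def SimpleMajorityCriterion (γ : ℕ → ℕ → ℕ) (m : ℕ) : Prop :=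
  ∀ (V : List (Fin m ≃ Fin m)) (c : Fin m), V.length < 2 * topCount V c →
    ∀ d, d ≠ c → totalScore γ V d < totalScore γ V c

section Profiles

variable {m : ℕ} (u w : Fin m ≃ Fin m) (k l : ℕ)

theorem totalScore_replicate_append_replicate (γ : ℕ → ℕ → ℕ) (c : Fin m) :
    totalScore γ (List.replicate k u ++ List.replicate l w) c =
      k * γ m ((u c : ℕ) + 1) + l * γ m ((w c : ℕ) + 1) := by
  simp [totalScore]

theorem topCount_replicate_append_replicate {c : Fin m} (hu : (u c : ℕ) = 0)
    (hw : (w c : ℕ) ≠ 0) :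
    topCount (List.replicate k u ++ List.replicate l w) c = k := by
  simp [topCount, List.countP_replicate, hu, hw]

end Profiles

namespace SimpleMajorityCriterion

variable {γ : ℕ → ℕ → ℕ}

theorem two_blocs_lt {m : ℕ} (hγ : SimpleMajorityCriterion γ m) {u w : Fin m ≃ Fin m}
    {c d : Fin m} (hdc : d ≠ c) (hu : (u c : ℕ) = 0) (hw : (w c : ℕ) ≠ 0) (k : ℕ) :
    (k + 1) * γ m ((u d : ℕ) + 1) + k * γ m ((w d : ℕ) + 1) <
      (k + 1) * γ m 1 + k * γ m ((w c : ℕ) + 1) := by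
  have hmajority : (List.replicate (k + 1) u ++ List.replicate k w).length <
      2 * topCount (List.replicate (k + 1) u ++ List.replicate k w) c := by
    rw [topCount_replicate_append_replicate u w _ _ hu hw]
    simp only [List.length_append, List.length_replicate]
    omega
  simpa [totalScore_replicate_append_replicate, hu] using hγ _ c hmajority d hdc

variable {n : ℕ}

theorem rotated_profile_lt (hγ : SimpleMajorityCriterion γ (n + 2)) (k : ℕ) :
    (k + 1) * γ (n + 2) 2 + k * γ (n + 2) 1 < (k + 1) * γ (n + 2) 1 + k * γ (n + 2) (n + 2) := by
  simpa using hγ.two_blocs_lt (u := Equiv.refl _) (w := (finRotate _).symm) (c := 0) (d := 1)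
    Fin.zero_ne_one.symm (by simp) (by simp) k

theorem score_two_lt_score_one (hγ : SimpleMajorityCriterion γ (n + 2)) :
    γ (n + 2) 2 < γ (n + 2) 1 := by
  simpa using hγ.rotated_profile_lt 0

theorem score_two_le_score_last (hγ : SimpleMajorityCriterion γ (n + 2)) :
    γ (n + 2) 2 ≤ γ (n + 2) (n + 2) := by
  set k := γ (n + 2) 1 - γ (n + 2) 2
  have hk : k + γ (n + 2) 2 = γ (n + 2) 1 := by
    have := hγ.score_two_lt_score_one
    omega
  have h := hγ.rotated_profile_lt k
  have hlt : k * γ (n + 2) 2 < k * (γ (n + 2) (n + 2) + 1) := by nlinarith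
  have := Nat.lt_of_mul_lt_mul_left hlt
  omega

end SimpleMajorityCriterion

theorem antitoneOn_Icc_of_succ_le {γ : ℕ → ℕ → ℕ} {m : ℕ}
    (hmono : ∀ i, 1 ≤ i → i < m → γ m (i + 1) ≤ γ m i) : AntitoneOn (γ m) (Set.Icc 1 m) :=
  antitoneOn_of_add_one_le Set.ordConnected_Icc fun i _ hi hi1 => hmono i hi.1 hi1.2

/-- A voter is a bijection from candidates to (0-indexed) positions; `γ m i` is the score of
the (1-indexed) position `i` in an election with `m` candidates. -/
theorem simple_majority_characterizes_plurality (γ : ℕ → ℕ → ℕ)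
    (hmono : ∀ m, 2 ≤ m → ∀ i, 1 ≤ i → i < m → γ m (i + 1) ≤ γ m i)
    (hmaj : ∀ m, 2 ≤ m → ∀ (V : List (Fin m ≃ Fin m)) (c : Fin m),
      V.length < 2 * V.countP (fun v => decide ((v c : ℕ) = 0)) →
      ∀ d : Fin m, d ≠ c →
        (V.map (fun v => γ m ((v d : ℕ) + 1))).sum <
        (V.map (fun v => γ m ((v c : ℕ) + 1))).sum) :
    ∀ m, 2 ≤ m → γ m 2 < γ m 1 ∧ ∀ i, 2 ≤ i → i ≤ m → γ m i = γ m 2 := by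
  intro m hm
  obtain ⟨n, rfl⟩ : ∃ n, m = n + 2 := ⟨m - 2, by omega⟩
  have hγ : SimpleMajorityCriterion γ (n + 2) := hmaj _ hm
  have hanti := antitoneOn_Icc_of_succ_le (hmono _ hm)
  refine ⟨hγ.score_two_lt_score_one, fun i hi2 hin => le_antisymm ?_ ?_⟩
  · exact hanti ⟨by omega, by omega⟩ ⟨by omega, hin⟩ hi2
  · exact hγ.score_two_le_score_last.trans (hanti ⟨by omega, hin⟩ ⟨by omega, le_rfl⟩ hin)
end

section
/- Let f : [m]_k → ℕ be a top-k-counting committee scoring function with counting function g satisfying g(0) = 0. Then f is OWA-based: for all (i_1,…,i_k) ∈ [m]_k, f(i_1,…,i_k) = Σ_{t=1}^{k} λ^t · α_k(i_t), where λ^t = g(t) − g(t−1) and α_k is the k-approval scoring function (α_k(i) = 1 if i ≤ k, else 0). -/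
/-- every top-k-counting scoring function is OWA-based, via the
OWA operator `λ^t = g(t) − g(t−1)` and the k-approval scoring function. -/
theorem top_k_counting_is_owa_based (m k : ℕ)
    (f : (Fin k → ℕ) → ℕ) (g : ℕ → ℕ) (hg0 : g 0 = 0)
    (htop : ∀ I : Fin k → ℕ, StrictMono I → (∀ t, 1 ≤ I t ∧ I t ≤ m) →
      f I = g (Finset.univ.filter (fun t => I t ≤ k)).card) :
    ∀ I : Fin k → ℕ, StrictMono I → (∀ t, 1 ≤ I t ∧ I t ≤ m) →
      (f I : ℤ) = ∑ t : Fin k,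
        ((g ((t : ℕ) + 1) : ℤ) - (g (t : ℕ) : ℤ)) * (if I t ≤ k then 1 else 0) := by
  intro I hmono hrange
  set S : Finset (Fin k) := Finset.univ.filter (fun t => I t ≤ k) with hS
  set c : ℕ := S.card with hc
  -- S is down-closed, hence t ∈ S ↔ t.val < c
  have hdown : ∀ s t : Fin k, s ≤ t → t ∈ S → s ∈ S := by
    intro s t hst ht
    simp only [hS, Finset.mem_filter, Finset.mem_univ, true_and] at ht ⊢
    exact le_trans (hmono.monotone hst) ht
  have hiff : ∀ t : Fin k, I t ≤ k ↔ (t : ℕ) < c := by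
    intro t
    constructor
    · intro ht
      have hsub : (Finset.univ.filter (fun s : Fin k => s ≤ t)) ⊆ S := by
        intro s hs
        simp only [Finset.mem_filter, Finset.mem_univ, true_and] at hs
        exact hdown s t hs (by simp [hS, ht])
      have hcard : (Finset.univ.filter (fun s : Fin k => s ≤ t)).card = (t : ℕ) + 1 := by
        have : (Finset.univ.filter (fun s : Fin k => s ≤ t)) = Finset.Iic t := by
          ext s; simp
        rw [this, Fin.card_Iic]
      have := Finset.card_le_card hsub
      omega
    · intro ht
      by_contra hnot
      have hsub : S ⊆ Finset.univ.filter (fun s : Fin k => (s : ℕ) < (t : ℕ)) := by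
        intro s hs
        simp only [Finset.mem_filter, Finset.mem_univ, true_and]
        by_contra hlt
        push_neg at hlt
        have := hdown t s (Fin.le_def.mpr hlt) hs
        simp only [hS, Finset.mem_filter, Finset.mem_univ, true_and] at this
        exact hnot this
      have hcard : (Finset.univ.filter (fun s : Fin k => (s : ℕ) < (t : ℕ))).card = (t : ℕ) := by
        have : (Finset.univ.filter (fun s : Fin k => (s : ℕ) < (t : ℕ))) = Finset.Iio t := by
          ext s
          simp only [Finset.mem_filter, Finset.mem_univ, true_and, Finset.mem_Iio, Fin.lt_def]
        rw [this, Fin.card_Iio]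
      have := Finset.card_le_card hsub
      omega
  have hck : c ≤ k := by
    have := Finset.card_le_card (Finset.filter_subset (fun t => I t ≤ k) Finset.univ)
    simpa using this
  rw [htop I hmono hrange]
  calc (g (Finset.univ.filter (fun t => I t ≤ k)).card : ℤ) = (g c : ℤ) := by rw [← hS, ← hc]
    _ = ∑ t ∈ Finset.range c, ((g (t + 1) : ℤ) - (g t : ℤ)) := by
        rw [Finset.sum_range_sub (fun n => (g n : ℤ))]
        simp [hg0]
    _ = ∑ t ∈ Finset.range k, ((g (t + 1) : ℤ) - (g t : ℤ)) * (if t < c then 1 else 0) := by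
        simp only [mul_ite, mul_one, mul_zero]
        rw [← Finset.sum_filter]
        have : Finset.filter (fun t => t < c) (Finset.range k) = Finset.range c := by
          ext n
          simp only [Finset.mem_filter, Finset.mem_range]
          omega
        rw [this]
    _ = ∑ t : Fin k, ((g ((t : ℕ) + 1) : ℤ) - (g (t : ℕ) : ℤ)) * (if (t : ℕ) < c then 1 else 0) :=
        (Fin.sum_univ_eq_sum_range
          (fun n => ((g (n + 1) : ℤ) - (g n : ℤ)) * (if n < c then 1 else 0)) k).symm
    _ = ∑ t : Fin k, ((g ((t : ℕ) + 1) : ℤ) - (g (t : ℕ) : ℤ)) * (if I t ≤ k then 1 else 0) :=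
        Finset.sum_congr rfl (fun t _ => by rw [if_congr (hiff t).symm rfl rfl])
end

section
/- Fix m and k with 2k ≤ m, and let f : [m]_k → ℕ be a committee scoring function. Suppose the committee scoring rule defined by f satisfies the fixed-majority criterion for m candidates and committee size k. Then f is top-k-counting: there is a function g : {0,…,k} → ℕ such that f(i_1,…,i_k) = g(|{t ∈ [k] : i_t ≤ k}|) for every (i_1,…,i_k) ∈ [m]_k. -/
/-!
If `I` has exactly `s` entries `≤ k`, it is squeezed pointwise between
`minSeq k s = (1, …, s, k+1, …, 2k-s)` and `maxSeq m k s = (k-s+1, …, k, m-k+s+1, …, m)`, so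
monotonicity gives `f (maxSeq) ≤ f I ≤ f (minSeq)` and it remains to show
`f (minSeq) ≤ f (maxSeq)`. Let `W` be the first `k` candidates and `S` a committee with
`|S ∩ W| = s`. Take `N + 1` voters ranking the candidates in order (`W` in the top `k`, `S` at
positions `minSeq`) and `N` voters ranking `S` in the top `k` and `W` at positions `maxSeq`.
Fixed majority makes `W` win, i.e. `(N+1) f(minSeq) + N T < (N+1) T + N f(maxSeq)` with
`T = f(1, …, k)`, and for `N = T` this forces `f(minSeq) ≤ f(maxSeq)`.
-/

open Finset

/-- The paper's `pos_v(S)`, with 1-indexed positions `v c + 1`. -/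
def posSeq (k : ℕ) {m : ℕ} (v : Fin m ≃ Fin m) (S : Finset (Fin m)) : Fin k → ℕ :=
  fun t => ((S.image fun c => (v c : ℕ) + 1).sort (· ≤ ·)).getD t 0

def committeeScore {m : ℕ} (k : ℕ) (f : (Fin k → ℕ) → ℕ) (V : List (Fin m ≃ Fin m))
    (S : Finset (Fin m)) : ℕ :=
  (V.map fun v => f (posSeq k v S)).sum

def FixedMajority (m k : ℕ) (f : (Fin k → ℕ) → ℕ) : Prop :=
  ∀ (V : List (Fin m ≃ Fin m)) (W : Finset (Fin m)), W.card = k →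
    V.length < 2 * V.countP (fun v => decide (∀ c ∈ W, (v c : ℕ) < k)) →
    ∀ S : Finset (Fin m), S.card = k → S ≠ W →
      committeeScore k f V S < committeeScore k f V W

theorem Finset.getD_sort_eq_of_strictMono {F : Finset ℕ} {k : ℕ} (hF : F.card = k)
    {τ : Fin k → ℕ} (hτ : StrictMono τ) (hmem : ∀ t, τ t ∈ F) (t : Fin k) :
    (F.sort (· ≤ ·)).getD t 0 = τ t := by
  rw [orderEmbOfFin_unique hF hmem hτ, orderEmbOfFin_apply,
    List.getD_eq_getElem _ _ (by simp [hF])]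
  rfl

theorem card_image_val_add_one {m : ℕ} (v : Fin m ≃ Fin m) (S : Finset (Fin m)) :
    (S.image fun c => (v c : ℕ) + 1).card = S.card :=
  card_image_of_injective _ fun a b h => v.injective (Fin.ext (by simpa using h))

theorem posSeq_eq_of_strictMono {m k : ℕ} {v : Fin m ≃ Fin m} {S : Finset (Fin m)}
    (hS : S.card = k) {τ : Fin k → ℕ} (hτ : StrictMono τ)
    (hmem : ∀ t, τ t ∈ S.image fun c => (v c : ℕ) + 1) : posSeq k v S = τ :=
  funext <| getD_sort_eq_of_strictMono (by rw [card_image_val_add_one, hS]) hτ hmem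

theorem posSeq_image_univ {m k : ℕ} (v : Fin m ≃ Fin m) {σ : Fin k → Fin m}
    (hσ : Function.Injective σ) (hmono : StrictMono fun t => (v (σ t) : ℕ) + 1) :
    posSeq k v (univ.image σ) = fun t => (v (σ t) : ℕ) + 1 :=
  posSeq_eq_of_strictMono (by rw [card_image_of_injective _ hσ, card_fin]) hmono
    fun t => mem_image_of_mem _ (mem_image_of_mem σ (mem_univ t))

theorem posSeq_eq_of_forall_lt {m k : ℕ} {v : Fin m ≃ Fin m} {S : Finset (Fin m)}
    (hS : S.card = k) (htop : ∀ c ∈ S, (v c : ℕ) < k) :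
    posSeq k v S = fun t : Fin k => (t : ℕ) + 1 := by
  have himage : (S.image fun c => (v c : ℕ) + 1) = Icc 1 k := by
    refine eq_of_subset_of_card_le (fun x hx => ?_) ?_
    · obtain ⟨c, hc, rfl⟩ := mem_image.1 hx
      have := htop c hc
      simp only [mem_Icc]
      omega
    · rw [card_image_val_add_one, hS, Nat.card_Icc, Nat.add_sub_cancel]
  refine posSeq_eq_of_strictMono hS (fun _ _ hab => Nat.succ_lt_succ hab) fun t => ?_
  rw [himage, mem_Icc]
  omega

theorem StrictMono.apply_add_sub_le {k : ℕ} {I : Fin k → ℕ} (hI : StrictMono I) {a b : Fin k}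
    (hab : a ≤ b) : I a + (b - a : ℕ) ≤ I b := by
  obtain ⟨d, hd⟩ : ∃ d, (b : ℕ) = a + d := ⟨b - a, by omega⟩
  induction d generalizing b with
  | zero => obtain rfl : a = b := Fin.ext hd.symm; simp
  | succ d ih =>
    have hb' : (a : ℕ) + d < k := by omega
    have hstep : I ⟨a + d, hb'⟩ < I b := hI (Fin.lt_def.2 (by dsimp only; omega))
    have := ih (b := ⟨a + d, hb'⟩) (Fin.le_def.2 (by dsimp only; omega)) rfl
    dsimp only at this
    omega

theorem Monotone.apply_le_iff_lt_card_filter {α : Type*} [LinearOrder α] {n : ℕ}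
    {I : Fin n → α} (hI : Monotone I) (a : α) (t : Fin n) :
    I t ≤ a ↔ (t : ℕ) < #{u | I u ≤ a} := by
  constructor
  · intro ht
    have hsub : Iic t ⊆ ({u | I u ≤ a} : Finset (Fin n)) := fun u hu =>
      mem_filter.2 ⟨mem_univ u, (hI (mem_Iic.1 hu)).trans ht⟩
    have := card_le_card hsub
    rw [Fin.card_Iic] at this
    omega
  · intro ht
    by_contra! hlt
    have hsub : ({u | I u ≤ a} : Finset (Fin n)) ⊆ Iio t := fun u hu => by
      rw [mem_Iio]
      by_contra! htu
      exact (hlt.trans_le (hI htu)).not_ge (mem_filter.1 hu).2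
    have := card_le_card hsub
    rw [Fin.card_Iio] at this
    omega

def minSeq (k s : ℕ) : Fin k → ℕ :=
  fun t => if (t : ℕ) < s then t + 1 else t + (k - s) + 1

def maxSeq (m k s : ℕ) : Fin k → ℕ :=
  fun t => if (t : ℕ) < s then t + (k - s) + 1 else t + (m - k) + 1

theorem minSeq_strictMono (k s : ℕ) : StrictMono (minSeq k s) := by
  intro a b hab
  rw [Fin.lt_def] at hab
  simp only [minSeq]
  split_ifs <;> omega

theorem maxSeq_strictMono {m k : ℕ} (s : ℕ) (hmk : 2 * k ≤ m) :
    StrictMono (maxSeq m k s) := by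
  intro a b hab
  rw [Fin.lt_def] at hab
  have := b.isLt
  simp only [maxSeq]
  split_ifs <;> omega

theorem minSeq_mem_Icc {m k : ℕ} (s : ℕ) (hmk : 2 * k ≤ m) (t : Fin k) :
    1 ≤ minSeq k s t ∧ minSeq k s t ≤ m := by
  have := t.isLt
  simp only [minSeq]
  split_ifs <;> omega

theorem maxSeq_mem_Icc {m k : ℕ} (s : ℕ) (hkm : k ≤ m) (t : Fin k) :
    1 ≤ maxSeq m k s t ∧ maxSeq m k s t ≤ m := by
  have := t.isLt
  simp only [maxSeq]
  split_ifs <;> omega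

theorem minSeq_self_eq_maxSeq (m k : ℕ) : minSeq k k = maxSeq m k k := by
  funext t
  simp [minSeq, maxSeq, t.isLt]

section Sandwich

variable {m k s : ℕ} {I : Fin k → ℕ}

theorem minSeq_le (hI : StrictMono I) (hpos : ∀ t, 1 ≤ I t)
    (hcount : ∀ t, I t ≤ k ↔ (t : ℕ) < s) (t : Fin k) : minSeq k s t ≤ I t := by
  simp only [minSeq]
  split_ifs with hts
  · have hgap := hI.apply_add_sub_le (Fin.le_def.2 (Nat.zero_le t) : ⟨0, by omega⟩ ≤ t)
    have hfirst := hpos ⟨0, by omega⟩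
    dsimp only at hgap
    omega
  · have hsk : s < k := by omega
    have hgap := hI.apply_add_sub_le (Fin.le_def.2 (not_lt.1 hts) : ⟨s, hsk⟩ ≤ t)
    have hbelow := (hcount ⟨s, hsk⟩).not.2 (lt_irrefl s)
    dsimp only at hgap
    omega

theorem le_maxSeq (hs : s ≤ k) (hI : StrictMono I) (hle : ∀ t, I t ≤ m)
    (hcount : ∀ t, I t ≤ k ↔ (t : ℕ) < s) (t : Fin k) : I t ≤ maxSeq m k s t := by
  simp only [maxSeq]
  split_ifs with hts
  · have hgap :=
      hI.apply_add_sub_le (Fin.le_def.2 (by dsimp only; omega) : t ≤ ⟨s - 1, by omega⟩)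
    have habove := (hcount ⟨s - 1, by omega⟩).2 (by dsimp only; omega)
    dsimp only at hgap
    omega
  · have hgap :=
      hI.apply_add_sub_le (Fin.le_def.2 (by dsimp only; omega) : t ≤ ⟨k - 1, by omega⟩)
    have hlast := hle ⟨k - 1, by omega⟩
    dsimp only at hgap
    omega

end Sandwich

section Election

variable {m k s : ℕ}

def mixedEmbedding (hmk : 2 * k ≤ m) (s : ℕ) : Fin k → Fin m :=
  fun t => ⟨if (t : ℕ) < s then t else t + (k - s), by have := t.isLt; split_ifs <;> omega⟩

theorem mixedEmbedding_injective (hmk : 2 * k ≤ m) (s : ℕ) :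
    Function.Injective (mixedEmbedding hmk s) := by
  intro a b hab
  have := congrArg Fin.val hab
  simp only [mixedEmbedding] at this
  ext
  split_ifs at this <;> omega

def firstCommittee (hkm : k ≤ m) : Finset (Fin m) :=
  univ.image (Fin.castLE hkm)

def mixedCommittee (hmk : 2 * k ≤ m) (s : ℕ) : Finset (Fin m) :=
  univ.image (mixedEmbedding hmk s)

theorem card_firstCommittee (hkm : k ≤ m) : (firstCommittee hkm).card = k := by
  rw [firstCommittee, card_image_of_injective _ (Fin.castLE_injective _), card_fin]

theorem card_mixedCommittee (hmk : 2 * k ≤ m) (s : ℕ) : (mixedCommittee hmk s).card = k := by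
  rw [mixedCommittee, card_image_of_injective _ (mixedEmbedding_injective hmk s), card_fin]

theorem val_lt_of_mem_firstCommittee {hkm : k ≤ m} {c : Fin m} (hc : c ∈ firstCommittee hkm) :
    (c : ℕ) < k := by
  obtain ⟨t, -, rfl⟩ := mem_image.1 hc
  exact t.isLt

theorem mixedCommittee_ne_firstCommittee (hmk : 2 * k ≤ m) (hsk : s < k) (hkm : k ≤ m) :
    mixedCommittee hmk s ≠ firstCommittee hkm := by
  intro h
  have hmem : mixedEmbedding hmk s ⟨s, hsk⟩ ∈ firstCommittee hkm :=
    h ▸ mem_image_of_mem _ (mem_univ _)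
  have := val_lt_of_mem_firstCommittee hmem
  simp only [mixedEmbedding, lt_self_iff_false, ↓reduceIte] at this
  omega

/-- With `W = firstCommittee` and `S = mixedCommittee s`, ranks `S \ W` first, then `W ∩ S`,
then the candidates outside `W ∪ S`, and `W \ S` last. -/
def rivalVoterFun (hmk : 2 * k ≤ m) (s : ℕ) : Fin m → Fin m :=
  fun c => ⟨if (c : ℕ) < s then c + (k - s)
    else if (c : ℕ) < k then c + (m - k)
    else if (c : ℕ) < 2 * k - s then c - k
    else c - (k - s), by have := c.isLt; split_ifs <;> omega⟩

theorem rivalVoterFun_injective (hmk : 2 * k ≤ m) (hs : s ≤ k) :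
    Function.Injective (rivalVoterFun hmk s) := by
  intro a b hab
  have := congrArg Fin.val hab
  simp only [rivalVoterFun] at this
  ext
  split_ifs at this <;> omega

noncomputable def rivalVoter (hmk : 2 * k ≤ m) (hs : s ≤ k) : Fin m ≃ Fin m :=
  Equiv.ofBijective _ (Finite.injective_iff_bijective.1 (rivalVoterFun_injective hmk hs))

theorem rivalVoter_apply_val (hmk : 2 * k ≤ m) (hs : s ≤ k) (c : Fin m) :
    (rivalVoter hmk hs c : ℕ) = if (c : ℕ) < s then c + (k - s)
      else if (c : ℕ) < k then c + (m - k)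
      else if (c : ℕ) < 2 * k - s then c - k
      else c - (k - s) :=
  rfl

theorem posSeq_refl_firstCommittee (hkm : k ≤ m) :
    posSeq k (Equiv.refl _) (firstCommittee hkm) = fun t : Fin k => (t : ℕ) + 1 :=
  posSeq_eq_of_forall_lt (card_firstCommittee hkm) fun _ => val_lt_of_mem_firstCommittee

theorem posSeq_refl_mixedCommittee (hmk : 2 * k ≤ m) (s : ℕ) :
    posSeq k (Equiv.refl _) (mixedCommittee hmk s) = minSeq k s := by
  have hseq : (fun t => (Equiv.refl (Fin m) (mixedEmbedding hmk s t) : ℕ) + 1) = minSeq k s := by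
    funext t
    simp only [Equiv.refl_apply, mixedEmbedding, minSeq]
    split_ifs <;> omega
  rw [mixedCommittee, posSeq_image_univ _ (mixedEmbedding_injective hmk s)
    (hseq ▸ minSeq_strictMono k s), hseq]

theorem posSeq_rivalVoter_firstCommittee (hmk : 2 * k ≤ m) (hs : s ≤ k) (hkm : k ≤ m) :
    posSeq k (rivalVoter hmk hs) (firstCommittee hkm) = maxSeq m k s := by
  have hseq : (fun t => (rivalVoter hmk hs (Fin.castLE hkm t) : ℕ) + 1) = maxSeq m k s := by
    funext t
    have := t.isLt
    simp only [rivalVoter_apply_val, Fin.val_castLE, maxSeq]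
    split_ifs <;> omega
  rw [firstCommittee, posSeq_image_univ _ (Fin.castLE_injective _)
    (hseq ▸ maxSeq_strictMono s hmk), hseq]

theorem posSeq_rivalVoter_mixedCommittee (hmk : 2 * k ≤ m) (hs : s ≤ k) :
    posSeq k (rivalVoter hmk hs) (mixedCommittee hmk s) = fun t : Fin k => (t : ℕ) + 1 :=
  posSeq_eq_of_forall_lt (card_mixedCommittee hmk s) fun c hc => by
    obtain ⟨t, -, rfl⟩ := mem_image.1 hc
    have := t.isLt
    simp only [rivalVoter_apply_val, mixedEmbedding]
    split_ifs <;> omega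

theorem rivalVoter_not_forall_lt (hmk : 2 * k ≤ m) (hsk : s < k) (hkm : k ≤ m) :
    ¬ ∀ c ∈ firstCommittee hkm, (rivalVoter hmk hsk.le c : ℕ) < k := fun h => by
  have := h (Fin.castLE hkm ⟨s, hsk⟩) (mem_image_of_mem _ (mem_univ _))
  simp only [Fin.castLE_mk, rivalVoter_apply_val, lt_self_iff_false, ↓reduceIte, hsk]
    at this
  omega

theorem FixedMajority.apply_minSeq_le_apply_maxSeq {f : (Fin k → ℕ) → ℕ}
    (hf : FixedMajority m k f) (hmk : 2 * k ≤ m) (hs : s ≤ k) :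
    f (minSeq k s) ≤ f (maxSeq m k s) := by
  obtain rfl | hsk := hs.eq_or_lt
  · rw [minSeq_self_eq_maxSeq m s]
  have hkm : k ≤ m := by omega
  have hW_top : ∀ c ∈ firstCommittee hkm, (Equiv.refl (Fin m) c : ℕ) < k :=
    fun _ => val_lt_of_mem_firstCommittee
  set N := f fun t : Fin k => (t : ℕ) + 1
  set V := List.replicate (N + 1) (Equiv.refl _) ++ List.replicate N (rivalVoter hmk hs)
  have hmaj : V.length < 2 * V.countP
      (fun v => decide (∀ c ∈ firstCommittee hkm, (v c : ℕ) < k)) := by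
    rw [List.countP_append, List.countP_replicate, List.countP_replicate,
      if_pos (decide_eq_true hW_top), if_neg (by simpa using rivalVoter_not_forall_lt hmk hsk hkm)]
    simp only [V, List.length_append, List.length_replicate]
    omega
  have hwin := hf V _ (card_firstCommittee hkm) hmaj _ (card_mixedCommittee hmk s)
    (mixedCommittee_ne_firstCommittee hmk hsk hkm)
  simp only [committeeScore, V, List.map_append, List.map_replicate, List.sum_append,
    List.sum_replicate, smul_eq_mul, posSeq_refl_firstCommittee, posSeq_refl_mixedCommittee,
    posSeq_rivalVoter_firstCommittee, posSeq_rivalVoter_mixedCommittee] at hwin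
  nlinarith

end Election

/-- for `2k ≤ m`, every committee scoring function whose rule
satisfies the fixed-majority criterion is top-k-counting. Voters are
bijections from candidates (`Fin m`) to 0-indexed positions; the score of a
committee `S` sums `f` applied to the increasing sequence of (1-indexed)
positions of members of `S`. -/
theorem fixed_majority_implies_top_k_counting (m k : ℕ) (hmk : 2 * k ≤ m)
    (f : (Fin k → ℕ) → ℕ)
    (hdom : ∀ I J : Fin k → ℕ, StrictMono I → StrictMono J →
      (∀ t, 1 ≤ I t ∧ I t ≤ m) → (∀ t, 1 ≤ J t ∧ J t ≤ m) →
      (∀ t, I t ≤ J t) → f J ≤ f I)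
    (score : List (Fin m ≃ Fin m) → Finset (Fin m) → ℕ)
    (hscore : ∀ V S, score V S =
      (V.map (fun v => f (fun t =>
        ((S.image (fun c => (v c : ℕ) + 1)).sort (· ≤ ·)).getD t 0))).sum)
    (hfm : ∀ (V : List (Fin m ≃ Fin m)) (W : Finset (Fin m)), W.card = k →
      V.length < 2 * V.countP (fun v => decide (∀ c ∈ W, (v c : ℕ) < k)) →
      ∀ S : Finset (Fin m), S.card = k → S ≠ W → score V S < score V W) :
    ∃ g : ℕ → ℕ, ∀ I : Fin k → ℕ, StrictMono I → (∀ t, 1 ≤ I t ∧ I t ≤ m) →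
      f I = g (Finset.univ.filter (fun t => I t ≤ k)).card := by
  obtain rfl : score = committeeScore k f := funext₂ hscore
  refine ⟨fun s => f (minSeq k s), fun I hI hIm => ?_⟩
  set s := #{t | I t ≤ k}
  have hcount : ∀ t, I t ≤ k ↔ (t : ℕ) < s := hI.monotone.apply_le_iff_lt_card_filter k
  have hs : s ≤ k := (card_filter_le _ _).trans_eq (card_fin k)
  have hle : f I ≤ f (minSeq k s) := hdom _ _ (minSeq_strictMono k s) hI
    (minSeq_mem_Icc s hmk) hIm (minSeq_le hI (fun t => (hIm t).1) hcount)
  have hge : f (maxSeq m k s) ≤ f I := hdom _ _ hI (maxSeq_strictMono s hmk) hIm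
    (maxSeq_mem_Icc s (by omega)) (le_maxSeq hs hI (fun t => (hIm t).2) hcount)
  exact hle.antisymm ((FixedMajority.apply_minSeq_le_apply_maxSeq hfm hmk hs).trans hge)
end

section
/- Fix m and k with 2k ≤ m, and let g : {0,…,k} → ℕ be a nondecreasing counting function with g(0) = 0 defining the top-k-counting committee scoring rule R. Suppose (i) g is not constant, and (ii) for all nonnegative integers k₁, k₂ with k₁ + k₂ ≤ k, g(k) − g(k−k₂) ≥ g(k₁+k₂) − g(k₁). Then R satisfies the fixed-majority criterion for m candidates and committee size k: in any election where strictly more than half of the voters rank all members of a size-k committee M in their top k positions, M has strictly higher score than every other size-k committee. -/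
/-!
A voter who ranks all of `M` in the top `k` has `M` as exact top-`k` set, so it gives `M` the
score `g k` and any other committee `S` the score `g j`, where `j = |S ∩ M| < k`; put
`D = g k - g j`. Any other voter gives `S` at most `D` more than `M`: if `S` meets the top-`k` set
in `t + u` candidates and `M` in `t`, then `j + u ≤ k`, and relaxed convexity with monotonicity
bounds `g (t + u) - g t` by `g k - g (k - u) ≤ g k - g j`. Relaxed convexity also makes `D`
positive, since a vanishing last increment `g k - g (k - 1)` forces all increments to vanish.
A strict majority of voters therefore outweighs the rest.
-/

open Finset

theorem List.sum_map_add_countP_nsmul_le {ι β : Type*} [AddCommMonoid β] [PartialOrder β]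
    [IsOrderedAddMonoid β] {p : ι → Bool} {a b : ι → β} {D : β} :
    ∀ {V : List ι}, (∀ v ∈ V, p v → a v + D ≤ b v) → (∀ v ∈ V, a v ≤ b v + D) →
      (V.map a).sum + V.countP p • D ≤ (V.map b).sum + V.countP (fun v => !p v) • D
  | [], _, _ => by simp
  | v :: V, hp, ha => by
    have ih := sum_map_add_countP_nsmul_le (V := V) (fun w hw => hp w (mem_cons_of_mem v hw))
      (fun w hw => ha w (mem_cons_of_mem v hw))
    simp only [map_cons, sum_cons, countP_cons, add_nsmul]
    by_cases hv : p v
    · simp only [hv, ↓reduceIte, one_nsmul, Bool.not_true, Bool.false_eq_true, zero_nsmul, add_zero]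
      convert add_le_add (hp v mem_cons_self hv) ih using 1 <;> abel
    · simp only [hv, Bool.false_eq_true, ↓reduceIte, zero_nsmul, add_zero, Bool.not_false, one_nsmul]
      convert add_le_add (ha v mem_cons_self) ih using 1 <;> abel

theorem List.sum_map_lt_sum_map_of_two_mul_lt_countP {ι β : Type*} [AddCommMonoid β]
    [PartialOrder β] [IsOrderedCancelAddMonoid β] {V : List ι} {p : ι → Bool} {a b : ι → β}
    {D : β} (hD : 0 < D) (hmaj : V.length < 2 * V.countP p)
    (hp : ∀ v ∈ V, p v → a v + D ≤ b v) (ha : ∀ v ∈ V, a v ≤ b v + D) :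
    (V.map a).sum < (V.map b).sum := by
  have hcount : V.countP (fun v => !p v) < V.countP p := by
    have := V.length_eq_countP_add_countP p
    simp only [Bool.not_eq_true, Bool.decide_eq_false] at this
    omega
  refine lt_of_add_lt_add_right (a := V.countP p • D) ?_
  calc (V.map a).sum + V.countP p • D
      ≤ (V.map b).sum + V.countP (fun v => !p v) • D := sum_map_add_countP_nsmul_le hp ha
    _ < (V.map b).sum + V.countP p • D := by gcongr

theorem Finset.card_inter_le_card_inter_add_card_sdiff {α : Type*} [DecidableEq α]
    (S M T : Finset α) : #(S ∩ T) ≤ #(M ∩ T) + #(S \ M) :=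
  calc #(S ∩ T) ≤ #(M ∩ T ∪ S \ M) := card_le_card fun c => by simp; tauto
    _ ≤ #(M ∩ T) + #(S \ M) := card_union_le _ _

theorem Finset.card_inter_lt_of_card_eq_of_ne {α : Type*} [DecidableEq α] {S M : Finset α}
    (hcard : #S = #M) (hne : S ≠ M) : #(S ∩ M) < #S := by
  refine (card_le_card inter_subset_left).lt_of_ne fun h => hne ?_
  have hSM : S ⊆ M := inter_eq_left.1 (eq_of_subset_of_card_le inter_subset_left h.ge)
  exact eq_of_subset_of_card_le hSM hcard.ge

theorem Finset.card_filter_equiv_val_lt {α : Type*} [Fintype α] {m k : ℕ} (e : α ≃ Fin m)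
    (hk : k ≤ m) : #{c | (e c : ℕ) < k} = k := by
  rw [card_equiv e (t := {i : Fin m | (i : ℕ) < k}) (by simp), Fin.card_filter_val_lt,
    min_eq_right hk]

theorem monotoneOn_Iic_of_le_succ {β : Type*} [Preorder β] {g : ℕ → β} {k : ℕ}
    (hg : ∀ t < k, g t ≤ g (t + 1)) : MonotoneOn g (Set.Iic k) :=
  monotoneOn_of_le_succ Set.ordConnected_Iic fun t _ _ ht => hg t (Order.succ_le_iff.mp ht)

def RelaxedConvexOn (g : ℕ → ℕ) (k : ℕ) : Prop :=
  ∀ k₁ k₂ : ℕ, k₁ + k₂ ≤ k → g (k₁ + k₂) - g k₁ ≤ g k - g (k - k₂)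

namespace RelaxedConvexOn

variable {g : ℕ → ℕ} {k : ℕ}

theorem apply_lt_of_lt (hg : RelaxedConvexOn g k) (hmono : MonotoneOn g (Set.Iic k))
    (hnc : ¬ ∀ x ≤ k, g x = g 0) {j : ℕ} (hj : j < k) : g j < g k := by
  suffices hlast : g (k - 1) < g k from
    (hmono (Set.mem_Iic.2 (by omega)) (Set.mem_Iic.2 (by omega)) (by omega)).trans_lt hlast
  by_contra! hlast
  refine hnc fun x => ?_
  induction x with
  | zero => exact fun _ => rfl
  | succ n ih =>
    intro hn
    have hstep := hg n 1 hn
    have hle := hmono (Set.mem_Iic.2 (by omega)) (Set.mem_Iic.2 hn) n.le_succ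
    have := ih (by omega)
    omega

theorem le_add_sub (hg : RelaxedConvexOn g k) (hmono : MonotoneOn g (Set.Iic k))
    {s t j : ℕ} (hs : s ≤ k) (ht : t ≤ k) (hst : s ≤ t + (k - j)) :
    g s ≤ g t + (g k - g j) := by
  rcases le_or_gt s t with hle | hlt
  · exact (hmono (Set.mem_Iic.2 hs) (Set.mem_Iic.2 ht) hle).trans (Nat.le_add_right _ _)
  have hconv := hg t (s - t) (by omega)
  rw [Nat.add_sub_cancel' hlt.le] at hconv
  have hj : g j ≤ g (k - (s - t)) :=
    hmono (Set.mem_Iic.2 (by omega)) (Set.mem_Iic.2 (by omega)) (by omega)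
  have hk : g (k - (s - t)) ≤ g k :=
    hmono (Set.mem_Iic.2 (by omega)) (Set.mem_Iic.2 le_rfl) (by omega)
  omega

end RelaxedConvexOn

theorem relaxed_convexity_implies_fixed_majority_general (m k : ℕ)
    (g : ℕ → ℕ) (hmono : ∀ t < k, g t ≤ g (t + 1))
    (hnc : ¬ ∀ x ≤ k, g x = g 0)
    (hcond : ∀ k₁ k₂ : ℕ, k₁ + k₂ ≤ k → g (k₁ + k₂) - g k₁ ≤ g k - g (k - k₂)) :
    ∀ (V : List (Fin m ≃ Fin m)) (M : Finset (Fin m)), M.card = k →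
      V.length < 2 * V.countP (fun v =>
        decide (M ⊆ Finset.univ.filter (fun c => ((v c : ℕ) < k)))) →
      ∀ S : Finset (Fin m), S.card = k → S ≠ M →
        (V.map (fun v =>
          g ((S ∩ Finset.univ.filter (fun c => ((v c : ℕ) < k))).card))).sum <
        (V.map (fun v =>
          g ((M ∩ Finset.univ.filter (fun c => ((v c : ℕ) < k))).card))).sum := by
  intro V M hM hmaj S hS hSM
  have hconv : RelaxedConvexOn g k := hcond
  have hmono := monotoneOn_Iic_of_le_succ hmono
  have hkm : k ≤ m := hM ▸ (card_le_univ M).trans_eq (Fintype.card_fin m)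
  have hj : #(S ∩ M) < k := hS ▸ card_inter_lt_of_card_eq_of_ne (hS.trans hM.symm) hSM
  have hD := hconv.apply_lt_of_lt hmono hnc hj
  refine List.sum_map_lt_sum_map_of_two_mul_lt_countP (tsub_pos_of_lt hD) hmaj
    (fun v _ hv => ?_) (fun v _ => ?_)
  · have hMT := eq_of_subset_of_card_le (of_decide_eq_true hv)
      (by rw [card_filter_equiv_val_lt v hkm, hM])
    rw [← hMT, inter_self, hM]
    omega
  · refine hconv.le_add_sub hmono (hS ▸ card_le_card inter_subset_left)
      (hM ▸ card_le_card inter_subset_left) ?_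
    refine (card_inter_le_card_inter_add_card_sdiff S M _).trans_eq ?_
    rw [card_sdiff, inter_comm M S, hS]

/-- sufficiency direction of the characterization. A
top-k-counting rule whose counting function `g` is non-constant and satisfies
the relaxed-convexity condition satisfies the fixed-majority criterion: a
committee supported by a strict majority beats every other committee.
A voter is a bijection from candidates to 0-indexed positions; the top-k set
of voter `v` is the set of candidates with position `< k`. -/
theorem relaxed_convexity_implies_fixed_majority (m k : ℕ) (hmk : 2 * k ≤ m)
    (g : ℕ → ℕ) (hg0 : g 0 = 0) (hmono : ∀ t < k, g t ≤ g (t + 1))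
    (hnc : ¬ ∀ x ≤ k, g x = g 0)
    (hcond : ∀ k₁ k₂ : ℕ, k₁ + k₂ ≤ k → g (k₁ + k₂) - g k₁ ≤ g k - g (k - k₂)) :
    ∀ (V : List (Fin m ≃ Fin m)) (M : Finset (Fin m)), M.card = k →
      V.length < 2 * V.countP (fun v =>
        decide (M ⊆ Finset.univ.filter (fun c => ((v c : ℕ) < k)))) →
      ∀ S : Finset (Fin m), S.card = k → S ≠ M →
        (V.map (fun v =>
          g ((S ∩ Finset.univ.filter (fun c => ((v c : ℕ) < k))).card))).sum <
        (V.map (fun v =>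
          g ((M ∩ Finset.univ.filter (fun c => ((v c : ℕ) < k))).card))).sum :=
  relaxed_convexity_implies_fixed_majority_general m k g hmono hnc hcond
end

section
/- Fix m and k with 2k ≤ m, and let g : {0,…,k} → ℕ be a counting function with g(0) = 0 defining a top-k-counting committee scoring rule R. If there exist nonnegative integers k₁, k₂ with k₁ + k₂ ≤ k such that g(k) − g(k−k₂) < g(k₁+k₂) − g(k₁), then R fails the fixed-majority criterion: there exists an election with m candidates in which strictly more than half of the voters rank all members of some size-k committee M in their top k positions, yet some other size-k committee has score at least as high as M. -/
/-!
Put `d = g k - g (k - k₂)`. Let `d + 1` voters have top-`k` set `M = {0, …, k-1}` and `d` voters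
have top-`k` set `B = {0, …, k₁-1} ∪ {k, …, 2k-k₁-1}`; this needs `2k` candidates. The committee
`S = {0, …, k-k₂-1} ∪ {k, …, k+k₂-1}` meets `M` in `k - k₂` and `B` in `k₁ + k₂` candidates, so
`score S - score M = (d + 1) (g (k - k₂) - g k) + d (g (k₁ + k₂) - g k₁) ≥ -(d + 1) d + d (d + 1) = 0`,
since over `ℤ` we have `g k - g (k - k₂) ≤ d < g (k₁ + k₂) - g k₁`.
-/

open Finset

lemma length_lt_two_mul_countP_replicate_succ_append {α : Type*} (p : α → Bool) {v : α}
    (hv : p v) (w : α) (q : ℕ) :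
    (List.replicate (q + 1) v ++ List.replicate q w).length <
      2 * (List.replicate (q + 1) v ++ List.replicate q w).countP p := by
  simp only [List.length_append, List.length_replicate, List.countP_append,
    List.countP_replicate, hv, ↓reduceIte]
  omega

lemma add_one_mul_add_mul_le_of_tsub_lt_tsub {a b c e : ℕ} (h : a - b < c - e) :
    (a - b + 1) * a + (a - b) * e ≤ (a - b + 1) * b + (a - b) * c := by
  have ha : a ≤ b + (a - b) := le_add_tsub
  have hc : e + (a - b) + 1 ≤ c := by omega
  calc (a - b + 1) * a + (a - b) * e
      ≤ (a - b + 1) * (b + (a - b)) + (a - b) * e := by gcongr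
    _ = (a - b + 1) * b + (a - b) * (e + (a - b) + 1) := by ring
    _ ≤ (a - b + 1) * b + (a - b) * c := by gcongr

namespace TopKCounting

variable {m : ℕ}

def topK (k : ℕ) (v : Fin m ≃ Fin m) : Finset (Fin m) := {c | (v c : ℕ) < k}

def score (g : ℕ → ℕ) (k : ℕ) (V : List (Fin m ≃ Fin m)) (W : Finset (Fin m)) : ℕ :=
  (V.map fun v => g #(W ∩ topK k v)).sum

lemma score_replicate_append (g : ℕ → ℕ) (k p q : ℕ) (v w : Fin m ≃ Fin m)
    (W : Finset (Fin m)) :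
    score g k (List.replicate p v ++ List.replicate q w) W =
      p * g #(W ∩ topK k v) + q * g #(W ∩ topK k w) := by
  simp [score, List.sum_replicate]

lemma exists_topK_eq {k : ℕ} {T : Finset (Fin m)} (hT : #T = k) :
    ∃ v : Fin m ≃ Fin m, topK k v = T := by
  have hk : k ≤ m := hT ▸ (card_le_univ T).trans_eq (Fintype.card_fin m)
  have hcard : Fintype.card {c // c ∈ T} = Fintype.card {i : Fin m // (i : ℕ) < k} := by
    rw [Fintype.card_coe, Fintype.card_subtype, Fin.card_filter_val_lt, hT, min_eq_right hk]
  let e := Fintype.equivOfCardEq hcard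
  refine ⟨e.extendSubtype, ?_⟩
  ext c
  simp only [topK, mem_filter, mem_univ, true_and]
  by_cases hc : c ∈ T
  · simpa [hc] using e.extendSubtype_mem c hc
  · simpa [hc] using e.extendSubtype_not_mem c hc

def block (k a b : ℕ) : Finset (Fin m) := {c | (c : ℕ) < a ∨ k ≤ (c : ℕ) ∧ (c : ℕ) < k + b}

lemma block_inter_block {k a b a' b' : ℕ} (ha : a ≤ k) (ha' : a' ≤ k) :
    (block k a b ∩ block k a' b' : Finset (Fin m)) = block k (min a a') (min b b') := by
  ext c
  simp only [block, mem_inter, mem_filter, mem_univ, true_and]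
  omega

lemma card_block {k a b : ℕ} (ha : a ≤ k) (hb : k + b ≤ m) :
    #(block k a b : Finset (Fin m)) = a + b := by
  have hdisj : Disjoint (Iio a) (Ico k (k + b)) :=
    disjoint_left.2 fun x hx hx' => by simp only [mem_Iio, mem_Ico] at hx hx'; omega
  rw [block, ← card_map Fin.valEmbedding, map_filter', Fin.map_valEmbedding_univ,
    show {x ∈ Iio m | ∃ c : Fin m, _} = Iio a ∪ Ico k (k + b) from ?_,
    card_union_of_disjoint hdisj, Nat.card_Iio, Nat.card_Ico, Nat.add_sub_cancel_left]
  ext x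
  simp only [mem_filter, mem_Iio, mem_union, mem_Ico, Fin.exists_iff, Fin.valEmbedding_apply]
  constructor
  · rintro ⟨-, i, -, hi, rfl⟩
    exact hi
  · intro hx
    exact ⟨by omega, x, by omega, hx, rfl⟩

lemma card_block_inter_block {k a b a' b' : ℕ} (ha : a ≤ k) (ha' : a' ≤ k) (hb : k + b ≤ m) :
    #(block k a b ∩ block k a' b' : Finset (Fin m)) = min a a' + min b b' := by
  rw [block_inter_block ha ha', card_block (by omega) (by omega)]

end TopKCounting

open TopKCounting

theorem condition_violation_implies_fixed_majority_failure_general (m k : ℕ)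
    (hmk : 2 * k ≤ m) (g : ℕ → ℕ)
    (hviol : ∃ k₁ k₂ : ℕ, k₁ + k₂ ≤ k ∧ g k - g (k - k₂) < g (k₁ + k₂) - g k₁) :
    ∃ (V : List (Fin m ≃ Fin m)) (M S : Finset (Fin m)),
      M.card = k ∧ S.card = k ∧ S ≠ M ∧
      V.length < 2 * V.countP (fun v =>
        decide (M ⊆ Finset.univ.filter (fun c => ((v c : ℕ) < k)))) ∧
      (V.map (fun v =>
        g ((M ∩ Finset.univ.filter (fun c => ((v c : ℕ) < k))).card))).sum ≤
      (V.map (fun v =>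
        g ((S ∩ Finset.univ.filter (fun c => ((v c : ℕ) < k))).card))).sum := by
  obtain ⟨k₁, k₂, hk, hlt⟩ := hviol
  have hk₂ : 0 < k₂ := Nat.pos_of_ne_zero fun h => by simp [h] at hlt
  let M : Finset (Fin m) := block k k 0
  let B : Finset (Fin m) := block k k₁ (k - k₁)
  let S : Finset (Fin m) := block k (k - k₂) k₂
  have hM : #M = k := card_block le_rfl (by omega)
  have hB : #B = k := (card_block (by omega) (by omega)).trans (by omega)
  have hS : #S = k := (card_block (by omega) (by omega)).trans (by omega)
  have hSM : #(S ∩ M) = k - k₂ :=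
    (card_block_inter_block (by omega) le_rfl (by omega)).trans (by omega)
  have hMB : #(M ∩ B) = k₁ := (card_block_inter_block le_rfl (by omega) (by omega)).trans (by omega)
  have hSB : #(S ∩ B) = k₁ + k₂ :=
    (card_block_inter_block (by omega) (by omega) (by omega)).trans (by omega)
  obtain ⟨vM, hvM⟩ := exists_topK_eq hM
  obtain ⟨vB, hvB⟩ := exists_topK_eq hB
  set d := g k - g (k - k₂)
  refine ⟨List.replicate (d + 1) vM ++ List.replicate d vB, M, S, hM, hS,
    fun h => by rw [h, inter_self] at hSM; omega,
    length_lt_two_mul_countP_replicate_succ_append (fun v => decide (M ⊆ topK k v))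
      (decide_eq_true_iff.2 hvM.ge) vB d, ?_⟩
  change score g k _ M ≤ score g k _ S
  rw [score_replicate_append, score_replicate_append, hvM, hvB, inter_self, hM, hSM, hMB, hSB]
  exact add_one_mul_add_mul_le_of_tsub_lt_tsub hlt

/-- necessity direction of the characterization. If the counting
function `g` violates the relaxed-convexity condition, then the corresponding
top-k-counting rule fails the fixed-majority criterion: there is an election
in which a strict majority ranks all members of `M` in their top `k`
positions, yet some other committee scores at least as high. -/
theorem condition_violation_implies_fixed_majority_failure (m k : ℕ)
    (hmk : 2 * k ≤ m) (g : ℕ → ℕ) (hg0 : g 0 = 0)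
    (hviol : ∃ k₁ k₂ : ℕ, k₁ + k₂ ≤ k ∧ g k - g (k - k₂) < g (k₁ + k₂) - g k₁) :
    ∃ (V : List (Fin m ≃ Fin m)) (M S : Finset (Fin m)),
      M.card = k ∧ S.card = k ∧ S ≠ M ∧
      V.length < 2 * V.countP (fun v =>
        decide (M ⊆ Finset.univ.filter (fun c => ((v c : ℕ) < k)))) ∧
      (V.map (fun v =>
        g ((M ∩ Finset.univ.filter (fun c => ((v c : ℕ) < k))).card))).sum ≤
      (V.map (fun v =>
        g ((S ∩ Finset.univ.filter (fun c => ((v c : ℕ) < k))).card))).sum :=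
  condition_violation_implies_fixed_majority_failure_general m k hmk g hviol
end

section
/- Fix k ≥ 2 and let g : {0,…,k} → ℕ be nondecreasing with g(0) = 0. Suppose g is concave (g(j) − g(j−1) ≤ g(j−1) − g(j−2) for all 2 ≤ j ≤ k) but not linear (there exist j with g(j) − g(j−1) ≠ g(j−1) − g(j−2)). Then g violates the fixed-majority condition: there exist nonnegative integers k₁, k₂ with k₁ + k₂ ≤ k such that g(k) − g(k−k₂) < g(k₁+k₂) − g(k₁). -/
/-- concave but non-linear counting functions violate the
fixed-majority condition. -/
theorem concave_nonlinear_violates_fixed_majority_condition (k : ℕ) (hk : 2 ≤ k)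
    (g : ℕ → ℕ) (hg0 : g 0 = 0) (hmono : ∀ j < k, g j ≤ g (j + 1))
    (hconc : ∀ j, 2 ≤ j → j ≤ k → g j - g (j - 1) ≤ g (j - 1) - g (j - 2))
    (hnl : ∃ j, 2 ≤ j ∧ j ≤ k ∧ g j - g (j - 1) ≠ g (j - 1) - g (j - 2)) :
    ∃ k₁ k₂ : ℕ, k₁ + k₂ ≤ k ∧ g k - g (k - k₂) < g (k₁ + k₂) - g k₁ := by
  obtain ⟨j, hj2, hjk, hne⟩ := hnl
  have hstrict : g j - g (j - 1) < g (j - 1) - g (j - 2) :=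
    lt_of_le_of_ne (hconc j hj2 hjk) hne
  have key : ∀ m, j ≤ m → m ≤ k → g m - g (m - 1) ≤ g j - g (j - 1) := by
    intro m hm
    induction m, hm using Nat.le_induction with
    | base => intro _; exact le_rfl
    | succ m hm ih =>
      intro hmk
      have h1 := hconc (m + 1) (by omega) hmk
      have e1 : m + 1 - 1 = m := by omega
      have e2 : m + 1 - 2 = m - 1 := by omega
      rw [e1, e2] at h1
      exact le_trans h1 (ih (by omega))
  refine ⟨j - 2, 1, by omega, ?_⟩
  have hj1 : j - 2 + 1 = j - 1 := by omega
  rw [hj1]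
  exact lt_of_le_of_lt (key k hjk le_rfl) hstrict
end

section
/- For every k ≥ 2, the k-Approval Chamberlin–Courant counting function g on {0,…,k}, defined by g(0) = 0 and g(x) = 1 for 1 ≤ x ≤ k, violates the fixed-majority condition: there exist nonnegative integers k₁, k₂ with k₁ + k₂ ≤ k such that g(k) − g(k−k₂) < g(k₁+k₂) − g(k₁). Consequently, for 2k ≤ m the α_k-CC rule fails the fixed-majority criterion. -/
/-- the k-Approval Chamberlin–Courant counting function
(`g(0)=0`, `g(x)=1` for `x ≥ 1`) violates the fixed-majority condition, and
consequently, for `2k ≤ m`, the `α_k`-CC rule fails the fixed-majority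
criterion. -/
theorem alpha_k_cc_fails_fixed_majority :
    ∀ m k : ℕ, 2 ≤ k → 2 * k ≤ m →
      (∃ k₁ k₂ : ℕ, k₁ + k₂ ≤ k ∧
        ((if k = 0 then 0 else 1) - (if k - k₂ = 0 then 0 else 1) : ℕ) <
        (if k₁ + k₂ = 0 then 0 else 1) - (if k₁ = 0 then 0 else 1)) ∧
      (∃ (V : List (Fin m ≃ Fin m)) (M S : Finset (Fin m)),
        M.card = k ∧ S.card = k ∧ S ≠ M ∧
        V.length < 2 * V.countP (fun v =>
          decide (M ⊆ Finset.univ.filter (fun c => ((v c : ℕ) < k)))) ∧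
        (V.map (fun v =>
          if (M ∩ Finset.univ.filter (fun c => ((v c : ℕ) < k))).card = 0
          then 0 else 1)).sum ≤
        (V.map (fun v =>
          if (S ∩ Finset.univ.filter (fun c => ((v c : ℕ) < k))).card = 0
          then 0 else 1)).sum) := by
  intro m k hk hm
  constructor
  · refine ⟨0, 1, by omega, ?_⟩
    have h1 : k ≠ 0 := by omega
    have h2 : k - 1 ≠ 0 := by omega
    simp [h1, h2]
  · haveI : NeZero m := ⟨by omega⟩
    have hkm : k ≤ m := by omega
    set e : Fin m ≃ Fin m := Equiv.refl _ with he
    set σ : Fin m ≃ Fin m := Equiv.addRight (⟨k, by omega⟩ : Fin m) with hσ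
    set M : Finset (Fin m) := Finset.map (Fin.castLEEmb hkm) Finset.univ with hM
    have hmemM : ∀ c : Fin m, c ∈ M ↔ (c : ℕ) < k := by
      intro c
      simp only [hM, Finset.mem_map, Finset.mem_univ, true_and]
      constructor
      · rintro ⟨i, rfl⟩; exact i.isLt
      · intro h; exact ⟨⟨c, h⟩, rfl⟩
    have hMcard : M.card = k := by simp [hM]
    have hm1 : m - 1 < m := by omega
    have hk1 : k - 1 < m := by omega
    set S : Finset (Fin m) := insert (⟨m - 1, hm1⟩ : Fin m) (M.erase ⟨k - 1, hk1⟩) with hS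
    have hnm : (⟨m - 1, hm1⟩ : Fin m) ∉ M := by
      rw [hmemM]; simp; omega
    have hScard : S.card = k := by
      rw [hS, Finset.card_insert_of_notMem (fun h => hnm (Finset.mem_of_mem_erase h)),
        Finset.card_erase_of_mem (by rw [hmemM]; simp; omega), hMcard]
      omega
    have hSneM : S ≠ M := by
      intro h
      exact hnm (h ▸ Finset.mem_insert_self _ _)
    have h0S : (0 : Fin m) ∈ S := by
      rw [hS]
      refine Finset.mem_insert_of_mem (Finset.mem_erase.2 ⟨?_, ?_⟩)
      · intro h
        have := congrArg Fin.val h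
        simp at this; omega
      · rw [hmemM]; simp; omega
    refine ⟨[e, e, σ], M, S, hMcard, hScard, hSneM, ?_, ?_⟩
    · -- majority
      have he' : decide (M ⊆ Finset.univ.filter (fun c => ((e c : ℕ) < k))) = true := by
        simp only [decide_eq_true_eq]
        intro c hc
        simp only [he, Equiv.refl_apply, Finset.mem_filter, Finset.mem_univ, true_and]
        exact (hmemM c).1 hc
      simp only [List.length_cons, List.length_nil, List.countP_cons, List.countP_nil, he']
      split_ifs <;> simp
    · -- scores
      simp only [List.map_cons, List.map_nil, List.sum_cons, List.sum_nil]
      have hσval : ∀ c : Fin m, ((σ c : Fin m) : ℕ) = ((c : ℕ) + k) % m := by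
        intro c; simp [hσ, Fin.add_def]
      have h0mem : ∀ (v : Fin m ≃ Fin m) (T : Finset (Fin m)), (0 : Fin m) ∈ T →
          ((v (0 : Fin m) : Fin m) : ℕ) < k →
          (T ∩ Finset.univ.filter (fun c => ((v c : ℕ) < k))).card ≠ 0 := by
        intro v T hT hv
        exact Finset.card_ne_zero_of_mem (Finset.mem_inter.2 ⟨hT,
          Finset.mem_filter.2 ⟨Finset.mem_univ _, hv⟩⟩)
      have h0M : (0 : Fin m) ∈ M := (hmemM 0).2 (by simp; omega)
      have h0val : ((e (0 : Fin m) : Fin m) : ℕ) < k := by simp [he]; omega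
      have hMe := h0mem e M h0M h0val
      have hSe := h0mem e S h0S h0val
      have hMσ : (M ∩ Finset.univ.filter (fun c => ((σ c : ℕ) < k))).card = 0 := by
        rw [Finset.card_eq_zero, Finset.eq_empty_iff_forall_notMem]
        intro c hc
        rw [Finset.mem_inter, hmemM, Finset.mem_filter] at hc
        obtain ⟨h1, -, h2⟩ := hc
        rw [hσval] at h2
        have hlt : (c : ℕ) + k < m := by omega
        rw [Nat.mod_eq_of_lt hlt] at h2
        omega
      have hSσ : (S ∩ Finset.univ.filter (fun c => ((σ c : ℕ) < k))).card ≠ 0 := by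
        refine Finset.card_ne_zero_of_mem (Finset.mem_inter.2 ⟨Finset.mem_insert_self _ _,
          Finset.mem_filter.2 ⟨Finset.mem_univ _, ?_⟩⟩)
        rw [hσval]
        have : m - 1 + k = m + (k - 1) := by omega
        simp only [this, Nat.add_mod_left]
        rw [Nat.mod_eq_of_lt (by omega)]
        omega
      simp [hMe, hSe, hMσ, hSσ]
end

section
/- Fix m, k with 2k ≤ m and a nondecreasing counting function g : {0,…,k} → ℕ with g(0) = 0 satisfying g(k) − g(k−k₂) ≥ g(k₁+k₂) − g(k₁) for all k₁+k₂ ≤ k, and g non-constant. Then in any election in which a fraction ξ > 1/2 of the n voters all rank the members of a size-k committee M in their top k positions, and all remaining voters have identical preference orders ranking k₁ members of M ∩ S and k₂ members of S∖M among their top k positions (where S ≠ M is any size-k committee with |S∩M| = k−k₂ and k₁+k₂ ≤ k and the remaining voters rank no member of M∖S in top k), the score of M under the top-k-counting rule with counting function g is strictly greater than the score of S: ξn·g(k) + (1−ξ)n·g(k₁) > ξn·g(k−k₂) + (1−ξ)n·g(k₁+k₂). -/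
/-- the score comparison at the heart of the sufficiency proof.
With `a = ξn` majority (`M`-)voters (`2a > n`, i.e. `ξ > 1/2`) and `n − a`
identical remaining voters ranking `k₁` members of `M ∩ S` and `k₂` members of
`S∖M` in their top `k` positions (`k₂ ≥ 1` since `S ≠ M`), committee `M`
strictly beats `S`. -/
theorem majority_committee_strictly_beats (k : ℕ) (g : ℕ → ℕ) (hg0 : g 0 = 0)
    (hmono : ∀ j < k, g j ≤ g (j + 1))
    (hnc : ¬ ∀ x ≤ k, g x = g 0)
    (hcond : ∀ k₁ k₂ : ℕ, k₁ + k₂ ≤ k → g (k₁ + k₂) - g k₁ ≤ g k - g (k - k₂))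
    (n a k₁ k₂ : ℕ) (ha : a ≤ n) (hmaj : n < 2 * a)
    (hk2 : 1 ≤ k₂) (hk12 : k₁ + k₂ ≤ k) :
    a * g (k - k₂) + (n - a) * g (k₁ + k₂) < a * g k + (n - a) * g k₁ := by
  -- monotonicity on [0,k]
  have mono' : ∀ i j : ℕ, i ≤ j → j ≤ k → g i ≤ g j := by
    intro i j hij hjk
    induction j with
    | zero => simp [Nat.le_zero.mp hij]
    | succ m ih =>
      rcases Nat.lt_or_ge i (m+1) with h | h
      · exact le_trans (ih (Nat.lt_succ_iff.mp h) (le_trans (Nat.le_succ m) hjk))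
          (hmono m (by omega))
      · have : i = m + 1 := le_antisymm hij h
        simp [this]
  have hk1 : 1 ≤ k := le_trans hk2 (by omega)
  have hle1 : g (k - k₂) ≤ g k := mono' _ _ (Nat.sub_le _ _) le_rfl
  have hle2 : g k₁ ≤ g (k₁ + k₂) := mono' _ _ (Nat.le_add_right _ _) hk12
  -- strict increase at the top
  have hgt : g (k - k₂) < g k := by
    by_contra h
    have heq : g (k - k₂) = g k := le_antisymm hle1 (le_of_not_gt h)
    have hk1eq : g (k - 1) = g k := by
      have h1 : g (k - k₂) ≤ g (k - 1) := mono' _ _ (by omega) (by omega)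
      have h2 : g (k - 1) ≤ g k := mono' _ _ (Nat.sub_le _ _) le_rfl
      omega
    have hstep : ∀ j, j < k → g (j + 1) = g j := by
      intro j hj
      have := hcond j 1 (by omega)
      have hm := hmono j hj
      omega
    apply hnc
    intro x hx
    induction x with
    | zero => rfl
    | succ m ih =>
      have := hstep m (by omega)
      rw [this, ih (by omega)]
  have key : (n - a) * (g (k₁ + k₂) - g k₁) < a * (g k - g (k - k₂)) := by
    calc (n - a) * (g (k₁ + k₂) - g k₁) ≤ (n - a) * (g k - g (k - k₂)) :=
          Nat.mul_le_mul_left _ (hcond k₁ k₂ hk12)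
      _ < a * (g k - g (k - k₂)) :=
          (Nat.mul_lt_mul_right (by omega)).mpr (by omega)
  have h1 : a * g k = a * g (k - k₂) + a * (g k - g (k - k₂)) := by
    rw [← Nat.mul_add, Nat.add_sub_cancel' hle1]
  have h2 : (n - a) * g (k₁ + k₂) = (n - a) * g k₁ + (n - a) * (g (k₁ + k₂) - g k₁) := by
    rw [← Nat.mul_add, Nat.add_sub_cancel' hle2]
  rw [h1, h2]
  linarith
end

section
/- Let G be a graph, K a positive integer, and θ ∈ (0,1). Suppose A is a polynomial-time algorithm that, for any election and committee size, returns a committee whose NearlyBloc score is at least θ times the optimal NearlyBloc score, where NearlyBloc is the top-k-counting rule with counting function g(x) = max(x−1, 0). Then, in the reduction where for each B ∈ [K] one forms an election whose candidates are the vertices of G plus B−2 private dummy candidates per edge, and with one voter per edge e = {u₁,u₂} ranking u₁, u₂ followed by e's dummies in the top B positions: for any size-B committee W' of NearlyBloc score at least θX (where X > B/θ), letting U' = W' ∩ V(G) and D' = W' ∖ U', the subgraph of G induced by U' has at least θX − |D'| edges and density at least θ·(X/B). -/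
/-- the key inequality in the inapproximability reduction for
NearlyBloc (counting function `g(x) = max(x−1,0)`). Candidates are the
vertices of `G` plus `B − 2` private dummy candidates per edge (indexed by
`Sym2 (Fin N) × Fin (B−2)`); for each edge `e = {u₁,u₂}` there is one voter
whose top `B` positions hold `u₁, u₂` and `e`'s dummies. If a size-`B`
committee `W'` has NearlyBloc score at least `θX`, where `0 < θ < 1`,
`B ≤ K`, and `B < θX`, then, with `U' = W' ∩ V(G)` and `D' = W' ∖ U'`,
the subgraph of `G` induced by `U'` has at least `θX − |D'|` edges and
density at least `θ·(X/B)`. -/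
theorem nearlybloc_reduction_density (N B K X : ℕ) (θ : ℚ)
    (hθ0 : 0 < θ) (hθ1 : θ < 1) (hK : 1 ≤ K) (hB1 : 1 ≤ B) (hBK : B ≤ K)
    (hBX : (B : ℚ) < θ * X)
    (G : SimpleGraph (Fin N)) [DecidableRel G.Adj]
    (W' : Finset (Fin N ⊕ Sym2 (Fin N) × Fin (B - 2))) (hW : W'.card = B)
    (topset : Sym2 (Fin N) → Finset (Fin N ⊕ Sym2 (Fin N) × Fin (B - 2)))
    (htopset : ∀ e, topset e =
      (Finset.univ.filter (fun x => x ∈ e)).image Sum.inl ∪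
      Finset.univ.image (fun d : Fin (B - 2) => Sum.inr (e, d)))
    (hscore : θ * X ≤ (↑(∑ e ∈ G.edgeFinset, ((W' ∩ topset e).card - 1)) : ℚ)) :
    let U' : Finset (Fin N) := Finset.univ.filter (fun v => Sum.inl v ∈ W')
    let D' : Finset (Fin N ⊕ Sym2 (Fin N) × Fin (B - 2)) :=
      W'.filter (fun x => x.isRight = true)
    let edgesIn : ℕ := (G.edgeFinset.filter (fun e => ∀ x ∈ e, x ∈ U')).card
    θ * X - D'.card ≤ (edgesIn : ℚ) ∧
    θ * (X / B) ≤ (edgesIn : ℚ) / U'.card := by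
  classical
  intro U' D' edgesIn
  set Be : Sym2 (Fin N) → Finset (Fin N ⊕ Sym2 (Fin N) × Fin (B - 2)) :=
    fun e => W'.filter (fun x => ∃ d : Fin (B-2), x = Sum.inr (e, d)) with hBe
  -- pointwise bound
  have pw : ∀ e ∈ G.edgeFinset, (W' ∩ topset e).card - 1 ≤
      (Be e).card + (if (∀ x ∈ e, x ∈ U') then 1 else 0) := by
    intro e he
    rw [htopset e, Finset.inter_union_distrib_left]
    have h1 : (W' ∩ Finset.univ.image (fun d : Fin (B - 2) => Sum.inr (e, d))) = Be e := by
      ext x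
      simp only [hBe, Finset.mem_inter, Finset.mem_image, Finset.mem_filter, Finset.mem_univ,
        true_and]
      constructor
      · rintro ⟨hx, d, rfl⟩; exact ⟨hx, d, rfl⟩
      · rintro ⟨hx, d, rfl⟩; exact ⟨hx, d, rfl⟩
    rw [h1]
    have h2 : (W' ∩ (Finset.univ.filter (fun x => x ∈ e)).image Sum.inl) =
        (U'.filter (fun v => v ∈ e)).image Sum.inl := by
      ext x
      simp only [U', Finset.mem_inter, Finset.mem_image, Finset.mem_filter, Finset.mem_univ,
        true_and]
      constructor
      · rintro ⟨hx, v, hv, rfl⟩; exact ⟨v, ⟨hx, hv⟩, rfl⟩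
      · rintro ⟨v, ⟨hx, hv⟩, rfl⟩; exact ⟨hx, v, hv, rfl⟩
    rw [h2]
    have himg : ((U'.filter (fun v => v ∈ e)).image Sum.inl).card =
        (U'.filter (fun v => v ∈ e)).card :=
      Finset.card_image_of_injective _
        (Sum.inl_injective : Function.Injective
          (Sum.inl : Fin N → Fin N ⊕ Sym2 (Fin N) × Fin (B-2)))
    -- bound the vertex part
    induction e using Sym2.ind with
    | _ a b =>
      have hsub : U'.filter (fun v => v ∈ s(a,b)) ⊆ {a, b} := by
        intro v hv
        simp only [Finset.mem_filter, Sym2.mem_iff] at hv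
        simp [hv.2]
      have h2' : (U'.filter (fun v => v ∈ s(a,b))).card ≤ 2 := by
        calc _ ≤ ({a,b} : Finset (Fin N)).card := Finset.card_le_card hsub
        _ ≤ 2 := Finset.card_insert_le a {b} |>.trans (by simp)
      by_cases hfull : ∀ x ∈ s(a,b), x ∈ U'
      · rw [if_pos hfull]
        have := (Finset.card_union_le _ _ : (((U'.filter (fun v => v ∈ s(a,b))).image Sum.inl) ∪ Be s(a,b)).card ≤ _)
        omega
      · rw [if_neg hfull]
        push_neg at hfull
        obtain ⟨x, hxe, hxU⟩ := hfull
        have h1' : (U'.filter (fun v => v ∈ s(a,b))).card ≤ 1 := by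
          rw [Sym2.mem_iff] at hxe
          apply Finset.card_le_one.mpr
          intro p hp q hq
          simp only [Finset.mem_filter, Sym2.mem_iff] at hp hq
          rcases hxe with rfl | rfl
          · rcases hp.2 with rfl | rfl
            · exact absurd hp.1 hxU
            · rcases hq.2 with rfl | rfl
              · exact absurd hq.1 hxU
              · rfl
          · rcases hp.2 with rfl | rfl
            · rcases hq.2 with rfl | rfl
              · rfl
              · exact absurd hq.1 hxU
            · exact absurd hp.1 hxU
        have := (Finset.card_union_le _ _ : (((U'.filter (fun v => v ∈ s(a,b))).image Sum.inl) ∪ Be s(a,b)).card ≤ _)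
        omega
  -- sum of Be cards ≤ D'.card
  have hBeD : ∑ e ∈ G.edgeFinset, (Be e).card ≤ D'.card := by
    rw [← Finset.card_biUnion]
    · apply Finset.card_le_card
      intro x hx
      simp only [Finset.mem_biUnion, hBe, Finset.mem_filter] at hx
      obtain ⟨e, _, hx, d, rfl⟩ := hx
      simp [D', hx]
    · intro e he f hf hef
      simp only [Finset.disjoint_left, hBe, Finset.mem_filter]
      rintro x ⟨_, d, rfl⟩ ⟨_, d', h⟩
      injection h with h2
      exact hef (congrArg Prod.fst h2)
  -- total bound
  have hsum : ∑ e ∈ G.edgeFinset, ((W' ∩ topset e).card - 1) ≤ D'.card + edgesIn := by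
    calc ∑ e ∈ G.edgeFinset, ((W' ∩ topset e).card - 1)
        ≤ ∑ e ∈ G.edgeFinset, ((Be e).card + (if (∀ x ∈ e, x ∈ U') then 1 else 0)) :=
          Finset.sum_le_sum pw
      _ = (∑ e ∈ G.edgeFinset, (Be e).card) + ∑ e ∈ G.edgeFinset, (if (∀ x ∈ e, x ∈ U') then 1 else 0) :=
          Finset.sum_add_distrib
      _ ≤ D'.card + edgesIn := by
          apply Nat.add_le_add hBeD
          exact le_of_eq (Finset.card_filter _ _).symm
  -- hence in ℚ
  have hQ : θ * X ≤ (D'.card : ℚ) + edgesIn := by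
    refine hscore.trans ?_
    have := Nat.cast_le (α := ℚ) |>.mpr hsum
    push_cast at this ⊢
    linarith
  have goal1 : θ * X - D'.card ≤ (edgesIn : ℚ) := by linarith
  refine ⟨goal1, ?_⟩
  -- cardinality equation
  have hUD : U'.card + D'.card = B := by
    have hbij : U'.card = (W'.filter (fun x => x.isRight = false)).card := by
      apply Finset.card_bij (fun v _ => Sum.inl v)
      · intro v hv; simp only [U', Finset.mem_filter, Finset.mem_univ, true_and] at hv
        simp [hv]
      · intro v _ w _ h; exact Sum.inl_injective h
      · intro x hx
        simp only [Finset.mem_filter] at hx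
        cases x with
        | inl v => exact ⟨v, by simp [U', hx.1], rfl⟩
        | inr p => simp at hx
    have hsplit := Finset.card_filter_add_card_filter_not
      (s := W') (p := fun x => x.isRight = true)
    have hneg : (W'.filter (fun x => ¬ x.isRight = true)).card
        = (W'.filter (fun x => x.isRight = false)).card := by
      congr 1
      apply Finset.filter_congr
      intro x _
      simp
    simp only [D']
    omega
  -- D'.card ≤ B, θX > B
  have hdB : (D'.card : ℚ) ≤ B := by
    have : D'.card ≤ B := by omega
    exact_mod_cast this
  -- edgesIn ≥ 1
  have hm1 : (1 : ℚ) ≤ edgesIn := by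
    have h0 : (0 : ℚ) < edgesIn := by linarith
    have : 0 < edgesIn := by exact_mod_cast h0
    exact_mod_cast this
  -- U' nonempty
  have hu1 : 1 ≤ U'.card := by
    have h0 : 0 < edgesIn := by
      have h0 : (0 : ℚ) < edgesIn := by linarith
      exact_mod_cast h0
    obtain ⟨e, he⟩ := Finset.card_pos.mp h0
    simp only [edgesIn, Finset.mem_filter] at he
    induction e using Sym2.ind with
    | _ a b =>
      have : a ∈ U' := he.2 a (by simp)
      exact Finset.card_pos.mpr ⟨a, this⟩
  -- final arithmetic
  have huB : (U'.card : ℚ) = (B : ℚ) - D'.card := by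
    have : (U'.card : ℚ) + D'.card = B := by exact_mod_cast hUD
    linarith
  have hu0 : (0 : ℚ) < U'.card := by exact_mod_cast hu1
  have hB0 : (0 : ℚ) < B := by exact_mod_cast hB1
  have hd0 : (0 : ℚ) ≤ D'.card := by positivity
  have hrw : θ * ((X:ℚ) / B) = θ * X / B := by ring
  rw [hrw, div_le_div_iff₀ hB0 hu0, huB]
  nlinarith [goal1, hBX, hd0, hB0, mul_le_mul_of_nonneg_right goal1 hB0.le,
    mul_nonneg hd0 (sub_pos.mpr hBX).le]
end
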